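/- Let n ≥ 2, let U be an n×n permutation matrix (a 0/1 matrix with exactly one 1 in every row and every column), and let W = (W_{ijk}) be a real array indexed by i, k ∈ {1,…,n} and j ∈ {2,…,n} with all entries nonnegative. Then W satisfies the coupling constraints Σ_k W_{ijk} = U_{ij} for all i and all j ≥ 2, and Σ_i W_{ijk} = U_{k,j−1} for all k and all j ≥ 2, if and only if W_{ijk} = U_{ij} · U_{k,j−1} for all i, k and all j ≥ 2. In particular, W_{ijk} = 1 if and only if U_{ij} = 1 and U_{k,j−1} = 1, and W_{ijk} = 0 otherwise. -/
import Mathlib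


open scoped BigOperators

/-- Predecessor position: `j - 1` on natural-valued indices (0-based). -/
def finPred {n : ℕ} (j : Fin n) : Fin n :=
  ⟨(j : ℕ) - 1, Nat.lt_of_le_of_lt (Nat.sub_le _ _) j.isLt⟩

lemma perm_col_unique {n : ℕ} (U : Fin n → Fin n → ℝ)
    (hU01 : ∀ i j, U i j = 0 ∨ U i j = 1)
    (hUcol : ∀ j, ∑ i, U i j = 1)
    {k k' c : Fin n} (hk : U k c = 1) (hne : k' ≠ k) : U k' c = 0 := by
  rcases hU01 k' c with h | h
  · exact h
  · exfalso
    have hsub : ({k, k'} : Finset (Fin n)) ⊆ Finset.univ := Finset.subset_univ _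
    have hle : ∑ i ∈ ({k, k'} : Finset (Fin n)), U i c ≤ ∑ i, U i c :=
      Finset.sum_le_sum_of_subset_of_nonneg hsub (by
        intro i _ _; rcases hU01 i c with h' | h' <;> simp [h'])
    rw [Finset.sum_pair (Ne.symm hne), hk, h, hUcol] at hle
    linarith

/-- For a permutation matrix `U` and nonnegative `W`, the coupling constraints
`Σ_k W_{ijk} = U_{ij}` and `Σ_i W_{ijk} = U_{k,j−1}` (for all output positions `j`
other than the first) hold iff `W_{ijk} = U_{ij} · U_{k,j−1}`; in particular,
under the constraints, `W_{ijk} = 1` iff `U_{ij} = 1` and `U_{k,j−1} = 1`,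
and `W_{ijk} = 0` otherwise. -/
theorem coupling_constraints_characterize_W {n : ℕ} (hn : 2 ≤ n)
    (U : Fin n → Fin n → ℝ)
    (hU01 : ∀ i j, U i j = 0 ∨ U i j = 1)
    (hUrow : ∀ i, ∑ j, U i j = 1)
    (hUcol : ∀ j, ∑ i, U i j = 1)
    (W : Fin n → Fin n → Fin n → ℝ)
    (hWnn : ∀ i j k, 0 ≤ W i j k) :
    (((∀ (i j : Fin n), 1 ≤ (j : ℕ) → ∑ k, W i j k = U i j) ∧
      (∀ (k j : Fin n), 1 ≤ (j : ℕ) → ∑ i, W i j k = U k (finPred j)))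
      ↔ (∀ (i j k : Fin n), 1 ≤ (j : ℕ) → W i j k = U i j * U k (finPred j))) ∧
    ((∀ (i j : Fin n), 1 ≤ (j : ℕ) → ∑ k, W i j k = U i j) →
     (∀ (k j : Fin n), 1 ≤ (j : ℕ) → ∑ i, W i j k = U k (finPred j)) →
     ∀ (i j k : Fin n), 1 ≤ (j : ℕ) →
       (W i j k = 1 ↔ U i j = 1 ∧ U k (finPred j) = 1) ∧
       (¬(U i j = 1 ∧ U k (finPred j) = 1) → W i j k = 0)) := by
  have key : (∀ (i j : Fin n), 1 ≤ (j : ℕ) → ∑ k, W i j k = U i j) →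
      (∀ (k j : Fin n), 1 ≤ (j : ℕ) → ∑ i, W i j k = U k (finPred j)) →
      ∀ (i j k : Fin n), 1 ≤ (j : ℕ) → W i j k = U i j * U k (finPred j) := by
    intro h1 h2 i j k hj
    -- helper: if row sum zero then each entry zero
    have zrow : ∀ i' k', U i' j = 0 → W i' j k' = 0 := by
      intro i' k' h0
      have hs := h1 i' j hj
      rw [h0] at hs
      have := (Finset.sum_eq_zero_iff_of_nonneg (fun x _ => hWnn i' j x)).1 hs
      exact this k' (Finset.mem_univ _)
    have zcol : ∀ i' k', U k' (finPred j) = 0 → W i' j k' = 0 := by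
      intro i' k' h0
      have hs := h2 k' j hj
      rw [h0] at hs
      have := (Finset.sum_eq_zero_iff_of_nonneg (fun x _ => hWnn x j k')).1 hs
      exact this i' (Finset.mem_univ _)
    rcases hU01 i j with h | h
    · rw [h, zero_mul]; exact zrow i k h
    rcases hU01 k (finPred j) with h' | h'
    · rw [h', mul_zero]; exact zcol i k h'
    · rw [h, h', mul_one]
      have hs := h1 i j hj
      rw [h] at hs
      have : ∑ k', W i j k' = W i j k := by
        apply Finset.sum_eq_single
        · intro k' _ hne
          exact zcol i k' (perm_col_unique U hU01 hUcol h' hne)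
        · intro h; exact absurd (Finset.mem_univ k) h
      rw [this] at hs
      exact hs
  constructor
  · constructor
    · rintro ⟨h1, h2⟩; exact key h1 h2
    · intro h
      constructor
      · intro i j hj
        have : ∑ k, W i j k = ∑ k, U i j * U k (finPred j) :=
          Finset.sum_congr rfl fun k _ => h i j k hj
        rw [this, ← Finset.mul_sum, hUcol, mul_one]
      · intro k j hj
        have : ∑ i, W i j k = ∑ i, U i j * U k (finPred j) :=
          Finset.sum_congr rfl fun i _ => h i j k hj
        rw [this, ← Finset.sum_mul, hUcol, one_mul]
  · intro h1 h2 i j k hj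
    have hw := key h1 h2 i j k hj
    constructor
    · constructor
      · intro h1'
        rcases hU01 i j with h | h
        · rw [hw, h, zero_mul] at h1'; norm_num at h1'
        rcases hU01 k (finPred j) with h' | h'
        · rw [hw, h', mul_zero] at h1'; norm_num at h1'
        · exact ⟨h, h'⟩
      · rintro ⟨ha, hb⟩; rw [hw, ha, hb, mul_one]
    · intro hne
      rcases hU01 i j with h | h
      · rw [hw, h, zero_mul]
      rcases hU01 k (finPred j) with h' | h'
      · rw [hw, h', mul_zero]
      · exact absurd ⟨h, h'⟩ hne
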